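/- Let E be a directed graph. The path space E* ∪ E^∞ (with the cylinder-set topology generated by sets Z(μ∖G), μ ∈ E*, G ⊆ s(μ)E¹ finite) is locally compact. -/

import Mathlib

structure DirectedGraph where
  V : Type
  E : Type
  r : E → V
  s : E → V

namespace DirectedGraph

variable {G : DirectedGraph}

/-- A finite path: a list of edges `μ₁ … μₙ` with `s μᵢ = r μᵢ₊₁`, together with its
range vertex (which is the range of the first edge when the path is nonempty, and is
the defining datum of the path when the path has length zero, i.e. is a vertex). -/
structure FinPath (G : DirectedGraph) where
  vtx : G.V
  edges : List G.E
  chain : edges.Chain' fun e f => G.s e = G.r f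
  hv : ∀ e ∈ edges.head?, G.r e = vtx

/-- An infinite path `μ₁μ₂…` with `s μᵢ = r μᵢ₊₁`. -/
structure InfPath (G : DirectedGraph) where
  edge : ℕ → G.E
  chain : ∀ n, G.s (edge n) = G.r (edge (n + 1))

/-- The path space `E* ∪ E^∞`. -/
abbrev PathSpace (G : DirectedGraph) := FinPath G ⊕ InfPath G

namespace FinPath

def length (μ : FinPath G) : ℕ := μ.edges.length

def range (μ : FinPath G) : G.V := μ.vtx

def source (μ : FinPath G) : G.V := (μ.edges.getLast?).elim μ.vtx G.s

/-- A vertex, regarded as a path of length zero. -/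
def ofVertex (G : DirectedGraph) (v : G.V) : FinPath G :=
  ⟨v, [], List.IsChain.nil, by simp⟩

/-- `μ.Extends ν` means `μ = νν′` for some path `ν′`. -/
def Extends (μ ν : FinPath G) : Prop := μ.vtx = ν.vtx ∧ ν.edges <+: μ.edges

end FinPath

def InfPath.range (x : InfPath G) : G.V := G.r (x.edge 0)

/-- `x.Extends ν` means the infinite path `x` is of the form `νx′`. -/
def InfPath.Extends (x : InfPath G) (ν : FinPath G) : Prop :=
  (ν.edges = [] → x.range = ν.vtx) ∧
  ∀ i, (h : i < ν.edges.length) → x.edge i = ν.edges.get ⟨i, h⟩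

/-- The cylinder set `Z(μ) = {w ∈ E* ∪ E^∞ : w = μw′}`. -/
def Cyl (μ : FinPath G) : Set (PathSpace G) :=
  {w | match w with
       | Sum.inl lam => lam.Extends μ
       | Sum.inr x => x.Extends μ}

/-- The cylinder set `Z(μe)` of the path `μ` followed by the edge `e`. -/
def CylSnoc (μ : FinPath G) (e : G.E) : Set (PathSpace G) :=
  {w | match w with
       | Sum.inl lam => (μ.edges ++ [e]) <+: lam.edges
       | Sum.inr x => ∀ i, (h : i < (μ.edges ++ [e]).length) →
           x.edge i = (μ.edges ++ [e]).get ⟨i, h⟩}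

/-- `Z(μ∖G) := Z(μ) ∖ ⋃_{e ∈ G} Z(μe)`. -/
def CylMinus (μ : FinPath G) (GS : Finset G.E) : Set (PathSpace G) :=
  Cyl μ \ ⋃ e ∈ GS, CylSnoc μ e

/-- The basic sets `Z(μ∖G)` for `μ ∈ E*` and `G ⊆ s(μ)E¹` finite. -/
def basicSets (G : DirectedGraph) : Set (Set (PathSpace G)) :=
  {S | ∃ (μ : FinPath G) (GS : Finset G.E),
        (∀ e ∈ GS, G.r e = μ.source) ∧ S = CylMinus μ GS}

end DirectedGraph

/-! Encode a path by its sequence of edges, padded with `∞` once a finite path has ended. The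
sequences that start with `μ` and are composable wherever consecutive entries are edges form a
closed subset of the compact space `(E ∪ {∞})^ℕ`, and truncating such a sequence at its first `∞`
maps it continuously onto `Z(μ)`, so `Z(μ)` is compact. For `e ∈ s(μ)E¹` the set `Z(μe)` is again a
cylinder, hence open, so every `Z(μ∖G)` is compact. Two basic sets containing a common point are
either nested or have the same `μ`, so the basic sets form a basis of compact neighbourhoods. -/
open Set TopologicalSpace OnePoint

namespace OnePoint

variable {X : Type*}

noncomputable def get (x : OnePoint X) (h : x ≠ ∞) : X :=
  (ne_infty_iff_exists.mp h).choose

@[simp]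
theorem coe_get (x : OnePoint X) (h : x ≠ ∞) : (x.get h : OnePoint X) = x :=
  (ne_infty_iff_exists.mp h).choose_spec

theorem eq_of_agree_until_infty {f g : ℕ → OnePoint X} (hf : ∀ ⦃i j⦄, f i = ∞ → i ≤ j → f j = ∞)
    (hg : ∀ ⦃i j⦄, g i = ∞ → i ≤ j → g j = ∞) (h : ∀ i, (∀ j < i, f j ≠ ∞) → g i = f i) :
    g = f := by
  classical
  funext i
  rcases em (∃ j < i, f j = ∞) with ⟨j, hji, hj⟩ | hi
  · have hex : ∃ k, f k = ∞ := ⟨j, hj⟩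
    have hk : Nat.find hex ≤ i := ((Nat.find_min' hex hj).trans_lt hji).le
    have hgk : g (Nat.find hex) = ∞ :=
      (h _ fun _ hm => Nat.find_min hex hm).trans (Nat.find_spec hex)
    rw [hg hgk hk, hf (Nat.find_spec hex) hk]
  · exact h i fun j hj hfj => hi ⟨j, hj, hfj⟩

variable [TopologicalSpace X] [DiscreteTopology X]

theorem isClopen_singleton_coe (e : X) : IsClopen {(e : OnePoint X)} :=
  ⟨isClosed_singleton, by simpa using isOpenMap_coe {e} (isOpen_discrete _)⟩

theorem isClosed_setOf_forall_coe (p : X → Prop) :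
    IsClosed {x : OnePoint X | ∀ e : X, x = e → p e} := by
  have : {x : OnePoint X | ∀ e : X, x = e → p e}ᶜ = (↑) '' {e | ¬p e} := by
    ext x
    induction x using OnePoint.rec <;> simp
  rw [← isOpen_compl_iff, this]
  exact isOpenMap_coe _ (isOpen_discrete _)

theorem isClosed_setOf_forall_coe₂ (R : X → X → Prop) :
    IsClosed {q : OnePoint X × OnePoint X | ∀ e e' : X, q.1 = e → q.2 = e' → R e e'} := by
  have : {q : OnePoint X × OnePoint X | ∀ e e' : X, q.1 = e → q.2 = e' → R e e'}ᶜ =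
      Prod.map (↑) (↑) '' {p : X × X | ¬R p.1 p.2} := by
    ext ⟨x, y⟩
    induction x using OnePoint.rec <;> induction y using OnePoint.rec <;> simp
  rw [← isOpen_compl_iff, this]
  exact (isOpenMap_coe.prodMap isOpenMap_coe) _ (isOpen_discrete _)

end OnePoint

namespace List

variable {X : Type*}

def toSeq (l : List X) (i : ℕ) : OnePoint X := l[i]?.elim ∞ (↑)

theorem toSeq_of_lt {l : List X} {i : ℕ} (h : i < l.length) : l.toSeq i = l[i] := by
  simp [toSeq, getElem?_eq_getElem h]

theorem toSeq_eq_coe_iff {l : List X} {i : ℕ} {e : X} : l.toSeq i = e ↔ l[i]? = Option.some e := by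
  cases h : l[i]? <;> simp [toSeq, h, eq_comm]

theorem toSeq_eq_infty_iff {l : List X} {i : ℕ} : l.toSeq i = ∞ ↔ l.length ≤ i := by
  rw [← getElem?_eq_none_iff]
  cases h : l[i]? <;> simp [toSeq, h]

theorem toSeq_injective : Function.Injective (toSeq : List X → ℕ → OnePoint X) := by
  intro l l' h
  refine ext_getElem? fun i => ?_
  cases h' : l'[i]? with
  | none => rw [getElem?_eq_none_iff, ← toSeq_eq_infty_iff, h, toSeq_eq_infty_iff,
      ← getElem?_eq_none_iff, h']
  | some e => rw [← toSeq_eq_coe_iff, h, toSeq_eq_coe_iff, h']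

def prefixSeqs (l : List X) : Set (ℕ → OnePoint X) := {f | ∀ i (hi : i < l.length), f i = l[i]}

theorem prefix_iff_toSeq_mem_prefixSeqs {l l' : List X} : l' <+: l ↔ l.toSeq ∈ l'.prefixSeqs := by
  simp only [prefix_iff_getElem?, prefixSeqs, mem_ofPred_eq, toSeq_eq_coe_iff]

theorem mem_prefixSeqs_iff_of_agree_until_infty {f g : ℕ → OnePoint X}
    (h : ∀ i, (∀ j < i, f j ≠ ∞) → g i = f i) (l : List X) :
    g ∈ l.prefixSeqs ↔ f ∈ l.prefixSeqs := by
  constructor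
  · intro hg i
    induction i using Nat.strong_induction_on with
    | _ i ih =>
      intro hi
      rw [← h i fun j hj => (ih j hj (hj.trans hi)).trans_ne (coe_ne_infty _), hg i hi]
  · intro hf i hi
    rw [h i fun j hj => (hf j (hj.trans hi)).trans_ne (coe_ne_infty _), hf i hi]

theorem isClopen_prefixSeqs [TopologicalSpace X] [DiscreteTopology X] (l : List X) :
    IsClopen l.prefixSeqs := by
  have : l.prefixSeqs = ⋂ i : Fin l.length, (fun f => f i) ⁻¹' {(l[i] : OnePoint X)} := by
    ext f
    simp [prefixSeqs, Fin.forall_iff]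
  rw [this]
  exact isClopen_iInter_of_finite fun i => (isClopen_singleton_coe _).preimage (continuous_apply _)

end List

namespace DirectedGraph

variable {G : DirectedGraph}

theorem FinPath.ext {μ ν : FinPath G} (hv : μ.vtx = ν.vtx) (he : μ.edges = ν.edges) : μ = ν := by
  cases μ; cases ν; cases hv; cases he; rfl

namespace PathSpace

def range : PathSpace G → G.V
  | .inl μ => μ.vtx
  | .inr x => x.range

def seq : PathSpace G → ℕ → OnePoint G.E
  | .inl μ => μ.edges.toSeq
  | .inr x => fun i => x.edge i

theorem seq_eq_infty_of_le {w : PathSpace G} {i j : ℕ} (hj : w.seq j = ∞) (hji : j ≤ i) :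
    w.seq i = ∞ := by
  cases w with
  | inl μ => exact List.toSeq_eq_infty_iff.mpr ((List.toSeq_eq_infty_iff.mp hj).trans hji)
  | inr x => exact absurd hj (coe_ne_infty _)

theorem s_eq_r_of_seq {w : PathSpace G} {n : ℕ} {e e' : G.E} (h : w.seq n = e)
    (h' : w.seq (n + 1) = e') : G.s e = G.r e' := by
  cases w with
  | inl μ =>
    obtain ⟨hn, rfl⟩ := List.getElem?_eq_some_iff.mp (List.toSeq_eq_coe_iff.mp h)
    obtain ⟨hn', rfl⟩ := List.getElem?_eq_some_iff.mp (List.toSeq_eq_coe_iff.mp h')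
    exact List.isChain_iff_getElem.mp μ.chain n hn'
  | inr x =>
    rw [← coe_injective h, ← coe_injective h']
    exact x.chain n

theorem r_eq_range_of_seq_zero {w : PathSpace G} {e : G.E} (h : w.seq 0 = e) :
    G.r e = w.range := by
  cases w with
  | inl μ => exact μ.hv e (by rw [List.head?_eq_getElem?]; exact List.toSeq_eq_coe_iff.mp h)
  | inr x => rw [← coe_injective h]; rfl

theorem ext_of_seq {w w' : PathSpace G} (hr : w.range = w'.range) (hs : w.seq = w'.seq) :
    w = w' := by
  cases w with
  | inl μ =>
    cases w' with
    | inl μ' => exact congrArg Sum.inl (FinPath.ext hr (List.toSeq_injective hs))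
    | inr x' =>
      have : μ.edges.toSeq μ.edges.length = ∞ := List.toSeq_eq_infty_iff.mpr le_rfl
      exact absurd (this.symm.trans (congrFun hs _)) (infty_ne_coe _)
  | inr x =>
    cases w' with
    | inl μ' =>
      have : μ'.edges.toSeq μ'.edges.length = ∞ := List.toSeq_eq_infty_iff.mpr le_rfl
      exact absurd ((congrFun hs _).trans this) (coe_ne_infty _)
    | inr x' =>
      obtain ⟨e, _⟩ := x
      obtain ⟨e', _⟩ := x'
      have : e = e' := funext fun n => coe_injective (congrFun hs n)
      subst this
      rfl

theorem mem_cyl_ofVertex_range (w : PathSpace G) : w ∈ Cyl (FinPath.ofVertex G w.range) := by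
  cases w with
  | inl μ => exact ⟨rfl, List.nil_prefix⟩
  | inr x => exact ⟨fun _ => rfl, fun i hi => absurd hi (Nat.not_lt_zero i)⟩

end PathSpace

open PathSpace

def prefixSet (l : List G.E) : Set (PathSpace G) := PathSpace.seq ⁻¹' l.prefixSeqs

theorem inl_mem_prefixSet (μ : FinPath G) : .inl μ ∈ prefixSet μ.edges :=
  List.prefix_iff_toSeq_mem_prefixSeqs.mp List.prefix_rfl

theorem range_eq_of_mem_prefixSet {w w' : PathSpace G} {l : List G.E} (hl : l ≠ [])
    (hw : w ∈ prefixSet l) (hw' : w' ∈ prefixSet l) : w.range = w'.range :=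
  have h0 : 0 < l.length := List.length_pos_iff.mpr hl
  (r_eq_range_of_seq_zero (hw 0 h0)).symm.trans (r_eq_range_of_seq_zero (hw' 0 h0))

theorem cylSnoc_eq_prefixSet (μ : FinPath G) (e : G.E) :
    CylSnoc μ e = prefixSet (μ.edges ++ [e]) := by
  ext w
  cases w with
  | inl p => exact List.prefix_iff_toSeq_mem_prefixSeqs
  | inr x => simp [CylSnoc, prefixSet, List.prefixSeqs, PathSpace.seq]

theorem cyl_eq_prefixSet_inter (ν : FinPath G) :
    Cyl ν = prefixSet ν.edges ∩ {w | w.range = ν.vtx} := by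
  ext w
  cases w with
  | inl p =>
    exact and_comm.trans (and_congr_left' List.prefix_iff_toSeq_mem_prefixSeqs)
  | inr x =>
    have hp : (∀ i (h : i < ν.edges.length), x.edge i = ν.edges.get ⟨i, h⟩) ↔
        .inr x ∈ prefixSet ν.edges := by
      simp [prefixSet, List.prefixSeqs, PathSpace.seq]
    refine (and_congr_right' hp).trans ⟨fun ⟨hr, hx⟩ => ⟨hx, ?_⟩, fun ⟨hx, hr⟩ => ⟨fun _ => hr, hx⟩⟩
    by_cases hν : ν.edges = []
    · exact hr hν
    · exact range_eq_of_mem_prefixSet hν hx (inl_mem_prefixSet ν)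

theorem cyl_subset_prefixSet (μ : FinPath G) : Cyl μ ⊆ prefixSet μ.edges :=
  (cyl_eq_prefixSet_inter μ).trans_subset inter_subset_left

theorem range_eq_of_mem_cyl {μ : FinPath G} {w : PathSpace G} (hw : w ∈ Cyl μ) :
    w.range = μ.vtx :=
  ((cyl_eq_prefixSet_inter μ).subset hw).2

theorem prefixSet_anti {l l' : List G.E} (h : l' <+: l) : prefixSet l ⊆ prefixSet l' :=
  fun _ hw i hi => by rw [hw i (hi.trans_le h.length_le), h.getElem hi]

theorem prefix_of_mem_prefixSet {w : PathSpace G} {l l' : List G.E} (hw : w ∈ prefixSet l)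
    (hw' : w ∈ prefixSet l') (hl : l'.length ≤ l.length) : l' <+: l :=
  List.prefix_iff_getElem.mpr ⟨hl, fun i hi =>
    coe_injective ((hw' i hi).symm.trans (hw i (hi.trans_le hl)))⟩

instance : TopologicalSpace G.E := ⊥

instance : DiscreteTopology G.E := ⟨rfl⟩

instance : TopologicalSpace (PathSpace G) := generateFrom (basicSets G)

def admissibleSeqs (μ : FinPath G) : Set (ℕ → OnePoint G.E) :=
  μ.edges.prefixSeqs ∩ {f | ∀ n (e e' : G.E), f n = e → f (n + 1) = e' → G.s e = G.r e'} ∩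
    {f | ∀ e : G.E, f 0 = e → G.r e = μ.vtx}

theorem isCompact_admissibleSeqs (μ : FinPath G) : IsCompact (admissibleSeqs μ) := by
  refine IsClosed.isCompact (((List.isClopen_prefixSeqs _).isClosed.inter ?_).inter ?_)
  · rw [ofPred_forall]
    exact isClosed_iInter fun n => (isClosed_setOf_forall_coe₂ fun e e' => G.s e = G.r e').preimage
      (f := fun f : ℕ → OnePoint G.E => (f n, f (n + 1))) (by fun_prop)
  · exact (isClosed_setOf_forall_coe fun e => G.r e = μ.vtx).preimage
      (f := fun f : ℕ → OnePoint G.E => f 0) (continuous_apply 0)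

-- Truncating at the first `∞` cannot be avoided: the sequences in which `∞` is absorbing do not
-- form a closed set.
open scoped Classical in
noncomputable def ofSeq (μ : FinPath G) (f : admissibleSeqs μ) : PathSpace G :=
  if h : ∃ n, f.1 n = ∞ then
    .inl
      { vtx := μ.vtx
        edges := List.ofFn fun i : Fin (Nat.find h) => (f.1 i).get (Nat.find_min h i.2)
        chain := List.isChain_iff_getElem.mpr fun i hi => by
          simp only [List.getElem_ofFn]
          exact f.2.1.2 i _ _ (coe_get _ _).symm (coe_get _ _).symm
        hv := fun e he => f.2.2 e (by
          obtain ⟨h0, rfl⟩ := List.getElem?_eq_some_iff.mp (List.head?_eq_getElem? ▸ he)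
          simp) }
  else
    .inr
      { edge := fun n => (f.1 n).get (not_exists.mp h n)
        chain := fun n => f.2.1.2 n _ _ (coe_get _ _).symm (coe_get _ _).symm }

theorem range_ofSeq (μ : FinPath G) (f : admissibleSeqs μ) : (ofSeq μ f).range = μ.vtx := by
  unfold ofSeq
  split_ifs with h
  · rfl
  · exact f.2.2 _ (coe_get _ (not_exists.mp h 0)).symm

theorem seq_ofSeq (μ : FinPath G) (f : admissibleSeqs μ) {i : ℕ} (hi : ∀ j < i, f.1 j ≠ ∞) :
    (ofSeq μ f).seq i = f.1 i := by
  classical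
  unfold ofSeq
  split_ifs with h
  · show List.toSeq _ i = _
    rcases lt_or_ge i (Nat.find h) with hlt | hge
    · rw [List.toSeq_of_lt (by simpa using hlt), List.getElem_ofFn, coe_get]
    · obtain rfl : Nat.find h = i :=
        hge.eq_or_lt.resolve_right fun hlt => hi _ hlt (Nat.find_spec h)
      rw [List.toSeq_eq_infty_iff.mpr (by simp), Nat.find_spec h]
  · exact coe_get _ (not_exists.mp h i)

theorem ofSeq_mem_prefixSet_iff (μ : FinPath G) (f : admissibleSeqs μ) (l : List G.E) :
    ofSeq μ f ∈ prefixSet l ↔ f.1 ∈ l.prefixSeqs :=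
  List.mem_prefixSeqs_iff_of_agree_until_infty (fun _ => seq_ofSeq μ f) l

theorem continuous_ofSeq (μ : FinPath G) : Continuous (ofSeq μ) := by
  refine continuous_generateFrom_iff.mpr ?_
  rintro _ ⟨ν, GS, -, rfl⟩
  have hpre (l : List G.E) : IsClopen (ofSeq μ ⁻¹' prefixSet l) := by
    have : ofSeq μ ⁻¹' prefixSet l = Subtype.val ⁻¹' l.prefixSeqs :=
      ext fun f => ofSeq_mem_prefixSet_iff μ f l
    rw [this]
    exact (List.isClopen_prefixSeqs l).preimage continuous_subtype_val
  have hrange : ofSeq μ ⁻¹' {w | w.range = ν.vtx} = {_f | μ.vtx = ν.vtx} := by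
    ext f
    simp [range_ofSeq]
  simp only [CylMinus, cyl_eq_prefixSet_inter, cylSnoc_eq_prefixSet, preimage_sdiff,
    preimage_inter, preimage_iUnion₂, hrange]
  exact ((hpre _).isOpen.inter isOpen_const).sdiff
    (GS.finite_toSet.isClosed_biUnion fun e _ => (hpre _).isClosed)

theorem seq_mem_admissibleSeqs {μ : FinPath G} {w : PathSpace G} (hw : w ∈ Cyl μ) :
    w.seq ∈ admissibleSeqs μ :=
  ⟨⟨cyl_subset_prefixSet μ hw, fun _ _ _ => s_eq_r_of_seq⟩,
    fun _ h => (r_eq_range_of_seq_zero h).trans (range_eq_of_mem_cyl hw)⟩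

theorem ofSeq_seq {μ : FinPath G} {w : PathSpace G} (hw : w ∈ Cyl μ) :
    ofSeq μ ⟨w.seq, seq_mem_admissibleSeqs hw⟩ = w := by
  refine ext_of_seq ?_ (eq_of_agree_until_infty (fun _ _ => seq_eq_infty_of_le)
    (fun _ _ => seq_eq_infty_of_le) fun _ => seq_ofSeq μ ⟨w.seq, seq_mem_admissibleSeqs hw⟩)
  exact (range_ofSeq μ _).trans (range_eq_of_mem_cyl hw).symm

theorem range_ofSeq_eq_cyl (μ : FinPath G) : Set.range (ofSeq μ) = Cyl μ := by
  refine Subset.antisymm ?_ fun w hw => ⟨_, ofSeq_seq hw⟩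
  rintro _ ⟨f, rfl⟩
  rw [cyl_eq_prefixSet_inter]
  exact ⟨(ofSeq_mem_prefixSet_iff μ f _).mpr f.2.1.1, range_ofSeq μ f⟩

theorem isCompact_cyl (μ : FinPath G) : IsCompact (Cyl μ) := by
  have := isCompact_iff_compactSpace.mp (isCompact_admissibleSeqs μ)
  rw [← range_ofSeq_eq_cyl]
  exact isCompact_range (continuous_ofSeq μ)

def FinPath.snoc (μ : FinPath G) (e : G.E) (he : G.r e = μ.source) : FinPath G where
  vtx := μ.vtx
  edges := μ.edges ++ [e]
  chain := by
    refine List.isChain_append.mpr ⟨μ.chain, List.isChain_singleton e, fun a ha b hb => ?_⟩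
    obtain rfl : e = b := by simpa using hb
    rw [he, FinPath.source, Option.mem_def.mp ha]
    rfl
  hv := by
    intro a ha
    cases hμ : μ.edges with
    | nil =>
      obtain rfl : e = a := by simpa [hμ] using ha
      rw [he, FinPath.source, hμ]
      rfl
    | cons => exact μ.hv a (by simpa [hμ] using ha)

theorem cylSnoc_eq_cyl_snoc (μ : FinPath G) (e : G.E) (he : G.r e = μ.source) :
    CylSnoc μ e = Cyl (μ.snoc e he) := by
  rw [cylSnoc_eq_prefixSet, cyl_eq_prefixSet_inter]
  exact (inter_eq_left.mpr fun w hw =>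
    range_eq_of_mem_prefixSet (by simp [FinPath.snoc]) hw (inl_mem_prefixSet (μ.snoc e he))).symm

theorem cylMinus_empty (μ : FinPath G) : CylMinus μ ∅ = Cyl μ := by
  simp [CylMinus]

theorem cyl_mem_basicSets (μ : FinPath G) : Cyl μ ∈ basicSets G :=
  ⟨μ, ∅, by simp, (cylMinus_empty μ).symm⟩

theorem isCompact_cylMinus (μ : FinPath G) (GS : Finset G.E) (hGS : ∀ e ∈ GS, G.r e = μ.source) :
    IsCompact (CylMinus μ GS) :=
  (isCompact_cyl μ).diff <| isOpen_biUnion fun e he =>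
    cylSnoc_eq_cyl_snoc μ e (hGS e he) ▸ isOpen_generateFrom_of_mem (cyl_mem_basicSets _)

theorem extends_of_mem_cyl {μ ν : FinPath G} {w : PathSpace G} (hμ : w ∈ Cyl μ)
    (hν : w ∈ Cyl ν) (h : ν.edges.length ≤ μ.edges.length) : μ.Extends ν :=
  ⟨(range_eq_of_mem_cyl hμ).symm.trans (range_eq_of_mem_cyl hν),
    prefix_of_mem_prefixSet (cyl_subset_prefixSet μ hμ) (cyl_subset_prefixSet ν hν) h⟩

theorem cyl_subset_cyl {μ ν : FinPath G} (h : μ.Extends ν) : Cyl μ ⊆ Cyl ν := by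
  rw [cyl_eq_prefixSet_inter, cyl_eq_prefixSet_inter]
  exact inter_subset_inter (prefixSet_anti h.2) fun w hw => hw.trans h.1

theorem cyl_subset_cylMinus {μ ν : FinPath G} {GS : Finset G.E} {x : PathSpace G}
    (hx : x ∈ Cyl μ) (hx' : x ∈ CylMinus ν GS) (h : ν.edges.length < μ.edges.length) :
    Cyl μ ⊆ CylMinus ν GS := by
  intro w hw
  refine ⟨cyl_subset_cyl (extends_of_mem_cyl hx hx'.1 h.le) hw, fun hwe => hx'.2 ?_⟩
  obtain ⟨e, he, hwe⟩ := mem_iUnion₂.mp hwe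
  rw [cylSnoc_eq_prefixSet] at hwe
  have hpre : ν.edges ++ [e] <+: μ.edges :=
    prefix_of_mem_prefixSet (cyl_subset_prefixSet μ hw) hwe (by simpa using h)
  refine mem_iUnion₂.mpr ⟨e, he, ?_⟩
  rw [cylSnoc_eq_prefixSet]
  exact prefixSet_anti hpre (cyl_subset_prefixSet μ hx)

theorem cylMinus_union [DecidableEq G.E] (μ : FinPath G) (A B : Finset G.E) :
    CylMinus μ (A ∪ B) = CylMinus μ A ∩ CylMinus μ B := by
  simp only [CylMinus, Finset.set_biUnion_union, sdiff_inter_sdiff]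

theorem isTopologicalBasis_basicSets : IsTopologicalBasis (basicSets G) where
  exists_subset_inter := by
    rintro _ ⟨μ, Gμ, hμ, rfl⟩ _ ⟨ν, Gν, hν, rfl⟩ x hx
    wlog hle : ν.edges.length ≤ μ.edges.length generalizing μ ν Gμ Gν
    · obtain ⟨t, ht, hxt, hsub⟩ := this ν Gν hν μ Gμ hμ ⟨hx.2, hx.1⟩ (le_of_not_ge hle)
      exact ⟨t, ht, hxt, hsub.trans_eq (inter_comm _ _)⟩
    rcases hle.eq_or_lt with heq | hlt
    · have hext := extends_of_mem_cyl hx.1.1 hx.2.1 hle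
      obtain rfl : ν = μ := FinPath.ext hext.1.symm (hext.2.eq_of_length heq)
      classical
      refine ⟨CylMinus ν (Gμ ∪ Gν), ⟨ν, _, ?_, rfl⟩, ?_, (cylMinus_union ν Gμ Gν).subset⟩
      · exact fun e he => (Finset.mem_union.mp he).elim (hμ e) (hν e)
      · exact (cylMinus_union ν Gμ Gν).symm ▸ hx
    · exact ⟨_, ⟨μ, Gμ, hμ, rfl⟩, hx.1,
        subset_inter subset_rfl (sdiff_subset.trans (cyl_subset_cylMinus hx.1.1 hx.2 hlt))⟩
  sUnion_eq := sUnion_eq_univ_iff.mpr fun w => ⟨_, cyl_mem_basicSets _, w.mem_cyl_ofVertex_range⟩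
  eq_generateFrom := rfl

end DirectedGraph

open DirectedGraph in
theorem pathSpace_locallyCompact_general (G : DirectedGraph) :
    @LocallyCompactSpace (PathSpace G) (TopologicalSpace.generateFrom (basicSets G)) :=
  LocallyCompactSpace.of_hasBasis (fun _ => isTopologicalBasis_basicSets.nhds_hasBasis)
    fun _ _ ⟨⟨μ, GS, hGS, hS⟩, _⟩ => hS ▸ isCompact_cylMinus μ GS hGS

open DirectedGraph in
/-- The path space of a countable directed graph, with the cylinder-set
topology, is locally compact. -/
theorem pathSpace_locallyCompact (G : DirectedGraph) [Countable G.V] [Countable G.E] :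
    @LocallyCompactSpace (PathSpace G) (TopologicalSpace.generateFrom (basicSets G)) :=
  pathSpace_locallyCompact_general G
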